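/- Let G1 be an r1-regular graph with n1 vertices and m1 edges (r1 ≥ 1), G2 an r2-regular graph with n2 vertices, and G3 an r3-regular graph with n3 vertices, and let 𝔊 = G1^S ◊ (G2^V ∪ G3^E). Identify the vertex set of 𝔊 with V(G1) ⊔ I(G1) ⊔ (I(G1)×V(G2)) ⊔ (V(G1)×V(G3)). Then the normalized Laplacian of 𝔊 is the block matrix 𝓛(𝔊) = [[I_{n1}, −a·R(G1), −R(G1) ⊗ bᵀ, −I_{n1} ⊗ cᵀ], [−a·R(G1)ᵀ, I_{m1}, O, O], [−R(G1)ᵀ ⊗ b, O, I_{m1} ⊗ (I_{n2} − A(G2)/(r2+2)), O], [−I_{n1} ⊗ c, O, O, I_{n1} ⊗ (I_{n3} − A(G3)/(r3+1))]], where R(G1) is the incidence matrix of G1, a = 1/√(2(r1·n2+r1+n3)), b = (1/√((r2+2)(r1·n2+r1+n3)))·𝟏_{n2}, c = (1/√((r3+1)(r1·n2+r1+n3)))·𝟏_{n3}, ⊗ is the Kronecker product, and 𝟏_k is the all-ones column vector of size k. -/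

import Mathlib

open Matrix Polynomial BigOperators Kronecker

namespace NLS

variable {V : Type*}

/-- Adjacency matrix over `ℝ` (classical decidability). -/
noncomputable def adjMat (G : SimpleGraph V) : Matrix V V ℝ :=
  letI := Classical.decRel G.Adj
  G.adjMatrix ℝ

/-- Degree of a vertex (classical decidability). -/
noncomputable def deg [Fintype V] (G : SimpleGraph V) (v : V) : ℕ :=
  letI := Classical.decRel G.Adj
  G.degree v

/-- The normalized Laplacian `I - D^{-1/2} A D^{-1/2}`. -/
noncomputable def normLap [Fintype V] (G : SimpleGraph V) : Matrix V V ℝ :=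
  letI := Classical.decEq V
  1 - (Matrix.diagonal fun v => (Real.sqrt (deg G v))⁻¹) * adjMat G *
      (Matrix.diagonal fun v => (Real.sqrt (deg G v))⁻¹)

/-- `G` is `r`-regular. -/
def IsReg [Fintype V] (G : SimpleGraph V) (r : ℕ) : Prop := ∀ v, deg G v = r

/-- Vertex-edge incidence matrix over `ℝ`. -/
def incMat [DecidableEq V] (G : SimpleGraph V) : Matrix V G.edgeSet ℝ :=
  Matrix.of fun v e => if v ∈ (e : Sym2 V) then 1 else 0

/-- The number of spanning trees of `G`. -/
noncomputable def numSpanningTrees [Fintype V] (G : SimpleGraph V) : ℕ :=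
  Nat.card {H : SimpleGraph V // H ≤ G ∧ H.IsTree}

section Corona

variable {V1 V2 V3 : Type*}

/-- Adjacency for the subdivision vertex-edge neighbourhood **vertex**-corona
`G1^S ⋈ (G2^V ∪ G3^E)`. Vertices: original `V1`, inserted `G1.edgeSet`,
copies of `G2` indexed by `V1`, copies of `G3` indexed by `G1.edgeSet`. -/
def svevAdj (G1 : SimpleGraph V1) (G2 : SimpleGraph V2) (G3 : SimpleGraph V3) :
    (V1 ⊕ (G1.edgeSet ⊕ ((V1 × V2) ⊕ (G1.edgeSet × V3)))) →
    (V1 ⊕ (G1.edgeSet ⊕ ((V1 × V2) ⊕ (G1.edgeSet × V3)))) → Prop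
  | .inl v, .inr (.inl e) => v ∈ (e : Sym2 V1)
  | .inr (.inl e), .inl v => v ∈ (e : Sym2 V1)
  | .inr (.inl e), .inr (.inr (.inl p)) => p.1 ∈ (e : Sym2 V1)
  | .inr (.inr (.inl p)), .inr (.inl e) => p.1 ∈ (e : Sym2 V1)
  | .inr (.inl e), .inr (.inr (.inr q)) => q.1 = e
  | .inr (.inr (.inr q)), .inr (.inl e) => q.1 = e
  | .inr (.inr (.inl p)), .inr (.inr (.inl p')) => p.1 = p'.1 ∧ G2.Adj p.2 p'.2
  | .inr (.inr (.inr q)), .inr (.inr (.inr q')) => q.1 = q'.1 ∧ G3.Adj q.2 q'.2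
  | _, _ => False

/-- The subdivision vertex-edge neighbourhood vertex-corona `G1^S ⋈ (G2^V ∪ G3^E)`. -/
def svev (G1 : SimpleGraph V1) (G2 : SimpleGraph V2) (G3 : SimpleGraph V3) :
    SimpleGraph (V1 ⊕ (G1.edgeSet ⊕ ((V1 × V2) ⊕ (G1.edgeSet × V3)))) where
  Adj := svevAdj G1 G2 G3
  symm := by
    constructor
    rintro (v|e|p|q) (v'|e'|p'|q') h <;>
      first
        | exact h
        | exact ⟨h.1.symm, h.2.symm⟩
        | exact h.elim
  loopless := by
    constructor
    rintro (v|e|p|q) h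
    · exact h
    · exact h
    · exact G2.loopless.irrefl _ h.2
    · exact G3.loopless.irrefl _ h.2

/-- Adjacency for the subdivision vertex-edge neighbourhood **edge**-corona
`G1^S ◊ (G2^V ∪ G3^E)`. Vertices: original `V1`, inserted `G1.edgeSet`,
copies of `G2` indexed by `G1.edgeSet`, copies of `G3` indexed by `V1`. -/
def sveeAdj (G1 : SimpleGraph V1) (G2 : SimpleGraph V2) (G3 : SimpleGraph V3) :
    (V1 ⊕ (G1.edgeSet ⊕ ((G1.edgeSet × V2) ⊕ (V1 × V3)))) →
    (V1 ⊕ (G1.edgeSet ⊕ ((G1.edgeSet × V2) ⊕ (V1 × V3)))) → Prop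
  | .inl v, .inr (.inl e) => v ∈ (e : Sym2 V1)
  | .inr (.inl e), .inl v => v ∈ (e : Sym2 V1)
  | .inl v, .inr (.inr (.inl p)) => v ∈ (p.1 : Sym2 V1)
  | .inr (.inr (.inl p)), .inl v => v ∈ (p.1 : Sym2 V1)
  | .inl v, .inr (.inr (.inr q)) => q.1 = v
  | .inr (.inr (.inr q)), .inl v => q.1 = v
  | .inr (.inr (.inl p)), .inr (.inr (.inl p')) => p.1 = p'.1 ∧ G2.Adj p.2 p'.2
  | .inr (.inr (.inr q)), .inr (.inr (.inr q')) => q.1 = q'.1 ∧ G3.Adj q.2 q'.2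
  | _, _ => False

/-- The subdivision vertex-edge neighbourhood edge-corona `G1^S ◊ (G2^V ∪ G3^E)`. -/
def svee (G1 : SimpleGraph V1) (G2 : SimpleGraph V2) (G3 : SimpleGraph V3) :
    SimpleGraph (V1 ⊕ (G1.edgeSet ⊕ ((G1.edgeSet × V2) ⊕ (V1 × V3)))) where
  Adj := sveeAdj G1 G2 G3
  symm := by
    constructor
    rintro (v|e|p|q) (v'|e'|p'|q') h <;>
      first
        | exact h
        | exact ⟨h.1.symm, h.2.symm⟩
        | exact h.elim
  loopless := by
    constructor
    rintro (v|e|p|q) h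
    · exact h
    · exact h
    · exact G2.loopless.irrefl _ h.2
    · exact G3.loopless.irrefl _ h.2

end Corona

/-! The corona has four classes of vertices, and the degree is constant on each class once
`G1`, `G2`, `G3` are regular: `r1 n2 + r1 + n3` on `V(G1)`, `2` on the inserted vertices,
`r2 + 2` on the copies of `G2` and `r3 + 1` on the copies of `G3`. Since the normalized
Laplacian has entry `-1/√(d_u d_v)` at an edge `uv`, the block form is read off entrywise. -/

lemma _root_.Nat.card_subtype_sum {α β : Type*} [Finite α] [Finite β] (p : α ⊕ β → Prop) :
    Nat.card {x // p x} = Nat.card {a // p (.inl a)} + Nat.card {b // p (.inr b)} := by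
  rw [Nat.card_congr Equiv.subtypeSum, Nat.card_sum]

lemma _root_.Nat.card_subtype_prod_fst {α β : Type*} (p : α → Prop) :
    Nat.card {x : α × β // p x.1} = Nat.card {a // p a} * Nat.card β := by
  rw [Nat.card_congr Equiv.prodSubtypeFstEquivSubtypeProd, Nat.card_prod]

lemma _root_.Nat.card_subtype_prod_fst_eq_and {α β : Type*} (a : α) (q : β → Prop) :
    Nat.card {x : α × β // a = x.1 ∧ q x.2} = Nat.card {b // q b} :=
  Nat.card_congr
    { toFun x := ⟨x.1.2, x.2.2⟩
      invFun b := ⟨(a, b.1), rfl, b.2⟩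
      left_inv := by rintro ⟨_, rfl, _⟩; rfl
      right_inv _ := rfl }

section Graph
variable {V : Type*} (G : SimpleGraph V)

lemma adjMat_apply [DecidableRel G.Adj] (u v : V) :
    adjMat G u v = if G.Adj u v then 1 else 0 := by
  rw [adjMat, SimpleGraph.adjMatrix_apply]
  congr!

variable [Fintype V]

open Classical in
lemma normLap_apply (u v : V) :
    normLap G u v =
      (if u = v then 1 else 0) - if G.Adj u v then (√(deg G u * deg G v : ℝ))⁻¹ else 0 := by
  rw [normLap, Matrix.sub_apply, mul_diagonal, diagonal_mul, one_apply, adjMat_apply,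
    Real.sqrt_mul (Nat.cast_nonneg _), mul_inv]
  split_ifs <;> ring

lemma deg_eq_natCard_adj (v : V) : deg G v = Nat.card {u // G.Adj v u} := by
  classical
  rw [deg, ← SimpleGraph.card_neighborSet_eq_degree, Nat.card_eq_fintype_card]
  rfl

lemma natCard_edgeSet_mem_eq_deg [Fintype G.edgeSet] (v : V) :
    Nat.card {e : G.edgeSet // v ∈ (e : Sym2 V)} = deg G v := by
  classical
  rw [deg, ← SimpleGraph.card_incidenceSet_eq_degree, ← Nat.card_eq_fintype_card]
  exact Nat.card_congr (Equiv.subtypeSubtypeEquivSubtypeInter (· ∈ G.edgeSet) (v ∈ ·))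

variable {G} in
lemma natCard_mem_edge_eq_two (e : G.edgeSet) : Nat.card {v // v ∈ (e : Sym2 V)} = 2 := by
  classical
  obtain ⟨e, he⟩ := e
  rw [← Sym2.card_toFinset_of_not_isDiag e (G.not_isDiag_of_mem_edgeSet he),
    ← Nat.card_eq_finsetCard]
  simp

end Graph

section Corona
variable {V1 V2 V3 : Type*} (G1 : SimpleGraph V1) (G2 : SimpleGraph V2) (G3 : SimpleGraph V3)

lemma svee_adj {x y} : (svee G1 G2 G3).Adj x y ↔ sveeAdj G1 G2 G3 x y := Iff.rfl

variable [Fintype V1] [Fintype V2] [Fintype V3] [Fintype G1.edgeSet]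

lemma deg_svee_inl (v : V1) :
    deg (svee G1 G2 G3) (.inl v) = deg G1 v * Fintype.card V2 + deg G1 v + Fintype.card V3 := by
  rw [deg_eq_natCard_adj]
  simp [Nat.card_subtype_sum, svee_adj, sveeAdj, natCard_edgeSet_mem_eq_deg,
    Nat.card_subtype_prod_fst (fun e : G1.edgeSet => v ∈ (e : Sym2 V1)),
    Nat.card_subtype_prod_fst (· = v)]
  ring

lemma deg_svee_inr_inl (e : G1.edgeSet) : deg (svee G1 G2 G3) (.inr (.inl e)) = 2 := by
  rw [deg_eq_natCard_adj]
  simp [Nat.card_subtype_sum, svee_adj, sveeAdj, natCard_mem_edge_eq_two]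

lemma deg_svee_inr_inr_inl (p : G1.edgeSet × V2) :
    deg (svee G1 G2 G3) (.inr (.inr (.inl p))) = deg G2 p.2 + 2 := by
  rw [deg_eq_natCard_adj, deg_eq_natCard_adj]
  simp [Nat.card_subtype_sum, svee_adj, sveeAdj, natCard_mem_edge_eq_two,
    Nat.card_subtype_prod_fst_eq_and, add_comm]

lemma deg_svee_inr_inr_inr (q : V1 × V3) :
    deg (svee G1 G2 G3) (.inr (.inr (.inr q))) = deg G3 q.2 + 1 := by
  rw [deg_eq_natCard_adj, deg_eq_natCard_adj]
  simp [Nat.card_subtype_sum, svee_adj, sveeAdj, Nat.card_subtype_prod_fst_eq_and, add_comm]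

end Corona

theorem stmt_5_general {V1 V2 V3 : Type*} [Fintype V1] [DecidableEq V1]
    [Fintype V2] [DecidableEq V2] [Fintype V3] [DecidableEq V3]
    (G1 : SimpleGraph V1) (G2 : SimpleGraph V2) (G3 : SimpleGraph V3)
    [Fintype G1.edgeSet]
    (r1 r2 r3 : ℕ)
    (h1 : IsReg G1 r1) (h2 : IsReg G2 r2) (h3 : IsReg G3 r3)
    (a b c : ℝ)
    (ha : a = (Real.sqrt (2 * ((r1 : ℝ) * Fintype.card V2 + r1 + Fintype.card V3)))⁻¹)
    (hb : b = (Real.sqrt (((r2 : ℝ) + 2) * ((r1 : ℝ) * Fintype.card V2 + r1 + Fintype.card V3)))⁻¹)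
    (hc : c = (Real.sqrt (((r3 : ℝ) + 1) * ((r1 : ℝ) * Fintype.card V2 + r1 + Fintype.card V3)))⁻¹) :
    normLap (svee G1 G2 G3) =
      Matrix.fromBlocks (1 : Matrix V1 V1 ℝ)
        (Matrix.fromCols (-a • incMat G1)
          (Matrix.fromCols
            (Matrix.of fun (v : V1) (p : G1.edgeSet × V2) => -(incMat G1 v p.1 * b))
            (Matrix.of fun (v : V1) (q : V1 × V3) => -(if q.1 = v then c else 0))))
        (Matrix.fromRows (-a • (incMat G1)ᵀ)
          (Matrix.fromRows
            (Matrix.of fun (p : G1.edgeSet × V2) (v : V1) => -(incMat G1 v p.1 * b))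
            (Matrix.of fun (q : V1 × V3) (v : V1) => -(if q.1 = v then c else 0))))
        (Matrix.fromBlocks (1 : Matrix G1.edgeSet G1.edgeSet ℝ)
          (0 : Matrix G1.edgeSet ((G1.edgeSet × V2) ⊕ (V1 × V3)) ℝ)
          (0 : Matrix ((G1.edgeSet × V2) ⊕ (V1 × V3)) G1.edgeSet ℝ)
          (Matrix.fromBlocks
            ((1 : Matrix G1.edgeSet G1.edgeSet ℝ) ⊗ₖ
              ((1 : Matrix V2 V2 ℝ) - ((r2 : ℝ) + 2)⁻¹ • adjMat G2))
            0 0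
            ((1 : Matrix V1 V1 ℝ) ⊗ₖ
              ((1 : Matrix V3 V3 ℝ) - ((r3 : ℝ) + 1)⁻¹ • adjMat G3)))) := by
  classical
  subst ha hb hc
  ext (v | e | p | q) (v' | e' | p' | q') <;>
    simp [normLap_apply, deg_svee_inl, deg_svee_inr_inl, deg_svee_inr_inr_inl,
      deg_svee_inr_inr_inr, h1 _, h2 _, h3 _, svee_adj, sveeAdj, incMat, adjMat_apply,
      one_apply, Prod.ext_iff, Real.sqrt_mul_self (by positivity : (0 : ℝ) ≤ r2 + 2),
      Real.sqrt_mul_self (by positivity : (0 : ℝ) ≤ r3 + 1)]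
  all_goals split_ifs <;> simp_all [mul_comm]

theorem stmt_5 {V1 V2 V3 : Type*} [Fintype V1] [DecidableEq V1]
    [Fintype V2] [DecidableEq V2] [Fintype V3] [DecidableEq V3]
    (G1 : SimpleGraph V1) (G2 : SimpleGraph V2) (G3 : SimpleGraph V3)
    [Fintype G1.edgeSet]
    (r1 r2 r3 : ℕ) (hr1 : 1 ≤ r1)
    (h1 : IsReg G1 r1) (h2 : IsReg G2 r2) (h3 : IsReg G3 r3)
    (a b c : ℝ)
    (ha : a = (Real.sqrt (2 * ((r1 : ℝ) * Fintype.card V2 + r1 + Fintype.card V3)))⁻¹)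
    (hb : b = (Real.sqrt (((r2 : ℝ) + 2) * ((r1 : ℝ) * Fintype.card V2 + r1 + Fintype.card V3)))⁻¹)
    (hc : c = (Real.sqrt (((r3 : ℝ) + 1) * ((r1 : ℝ) * Fintype.card V2 + r1 + Fintype.card V3)))⁻¹) :
    normLap (svee G1 G2 G3) =
      Matrix.fromBlocks (1 : Matrix V1 V1 ℝ)
        (Matrix.fromCols (-a • incMat G1)
          (Matrix.fromCols
            (Matrix.of fun (v : V1) (p : G1.edgeSet × V2) => -(incMat G1 v p.1 * b))
            (Matrix.of fun (v : V1) (q : V1 × V3) => -(if q.1 = v then c else 0))))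
        (Matrix.fromRows (-a • (incMat G1)ᵀ)
          (Matrix.fromRows
            (Matrix.of fun (p : G1.edgeSet × V2) (v : V1) => -(incMat G1 v p.1 * b))
            (Matrix.of fun (q : V1 × V3) (v : V1) => -(if q.1 = v then c else 0))))
        (Matrix.fromBlocks (1 : Matrix G1.edgeSet G1.edgeSet ℝ)
          (0 : Matrix G1.edgeSet ((G1.edgeSet × V2) ⊕ (V1 × V3)) ℝ)
          (0 : Matrix ((G1.edgeSet × V2) ⊕ (V1 × V3)) G1.edgeSet ℝ)
          (Matrix.fromBlocks
            ((1 : Matrix G1.edgeSet G1.edgeSet ℝ) ⊗ₖ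
              ((1 : Matrix V2 V2 ℝ) - ((r2 : ℝ) + 2)⁻¹ • adjMat G2))
            0 0
            ((1 : Matrix V1 V1 ℝ) ⊗ₖ
              ((1 : Matrix V3 V3 ℝ) - ((r3 : ℝ) + 1)⁻¹ • adjMat G3)))) :=
  stmt_5_general G1 G2 G3 r1 r2 r3 h1 h2 h3 a b c ha hb hc

end NLS
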